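/- arXiv:1406.7654 — 8 statements merged into one kernel-verified Lean document; each statement's English description precedes it below -/
import Mathlib

section
/- Let U be a nonsingular nonnegative n×n matrix with U_{ij} ≤ U_{ii} for all i, j, such that μ := U⁻¹𝟏 ≥ 0 entrywise. Let q be an index maximizing U_{ii}. If U_{qq}·(𝟏ᵗμ) = 1, then there exists a column of U all of whose entries equal U_{qq}. Conversely, if U has a column all of whose entries equal U_{qq}, then U_{qq}·(𝟏ᵗμ) = 1. -/
open Matrix BigOperators

theorem max_diag_mass_eq_one_iff_const_column (n : ℕ) (U : Matrix (Fin n) (Fin n) ℝ)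
    (hU : IsUnit U.det) (hnonneg : ∀ i j, 0 ≤ U i j)
    (hrowdom : ∀ i j, U i j ≤ U i i)
    (hμ : ∀ i, 0 ≤ (U⁻¹ *ᵥ (fun _ => (1 : ℝ))) i)
    (q : Fin n) (hq : ∀ i, U i i ≤ U q q) :
    U q q * ∑ k, (U⁻¹ *ᵥ (fun _ => (1 : ℝ))) k = 1 ↔ ∃ j, ∀ i, U i j = U q q := by
  set μ : Fin n → ℝ := U⁻¹ *ᵥ (fun _ => (1 : ℝ)) with hμdef
  have hUμ : U *ᵥ μ = (fun _ => (1 : ℝ)) := by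
    rw [hμdef, mulVec_mulVec, Matrix.mul_nonsing_inv U hU, one_mulVec]
  have h1 : ∀ i, ∑ j, U i j * μ j = 1 := by
    intro i
    have := congrFun hUμ i
    simpa [mulVec, dotProduct] using this
  constructor
  · intro h
    have hSnn : 0 ≤ ∑ k, μ k := Finset.sum_nonneg fun k _ => hμ k
    have hUqq : 0 < U q q := by
      by_contra hle
      push_neg at hle
      have : U q q * ∑ k, μ k ≤ 0 := mul_nonpos_of_nonpos_of_nonneg hle hSnn
      linarith
    have hS : 0 < ∑ k, μ k := by
      rcases hSnn.lt_or_eq with h' | h'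
      · exact h'
      · exfalso; rw [← h'] at h; simp at h
    -- equality of sums
    have hterm : ∀ i j, U i j * μ j = U q q * μ j := by
      intro i
      have hle : ∀ j ∈ Finset.univ, U i j * μ j ≤ U q q * μ j := by
        intro j _
        exact mul_le_mul_of_nonneg_right ((hrowdom i j).trans (hq i)) (hμ j)
      have hsum : ∑ j, U i j * μ j = ∑ j, U q q * μ j := by
        rw [h1 i, ← Finset.mul_sum, h]
      have := (Finset.sum_eq_sum_iff_of_le hle).mp hsum
      intro j
      exact this j (Finset.mem_univ j)
    -- some μ j > 0
    obtain ⟨j, hj⟩ : ∃ j, 0 < μ j := by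
      by_contra hc
      push_neg at hc
      have : ∑ k, μ k = 0 :=
        le_antisymm (Finset.sum_nonpos fun k _ => hc k) hSnn
      linarith
    exact ⟨j, fun i => mul_right_cancel₀ (ne_of_gt hj) (hterm i j)⟩
  · rintro ⟨j, hj⟩
    have hUqq : U q q ≠ 0 := by
      intro h0
      have : U.det = 0 := det_eq_zero_of_column_eq_zero j (fun i => by rw [hj i, h0])
      exact hU.ne_zero this
    have hv : U *ᵥ (fun k => if k = j then (U q q)⁻¹ else 0) = (fun _ => (1 : ℝ)) := by
      funext i
      simp only [mulVec, dotProduct, mul_ite, mul_zero]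
      rw [Finset.sum_ite_eq' Finset.univ j]
      simp [hj i, mul_inv_cancel₀ hUqq]
    have hμeq : μ = fun k => if k = j then (U q q)⁻¹ else 0 := by
      rw [hμdef, ← hv, mulVec_mulVec, Matrix.nonsing_inv_mul U hU, one_mulVec]
    rw [hμeq]
    rw [Finset.sum_ite_eq' Finset.univ j]
    simp [mul_inv_cancel₀ hUqq]
end

section
/- Let U be a nonsingular nonnegative n×n matrix whose inverse is a Z-matrix (off-diagonal entries of U⁻¹ are nonpositive), and suppose the n-th row sum of U is minimal: Σ_j U_{nj} ≤ Σ_j U_{ij} for all i. Assume all row sums of U are positive. Then the n-th row sum of U⁻¹ satisfies Σ_l (U⁻¹)_{nl} ≥ 1/(Σ_j U_{nj}) > 0. -/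
open Matrix BigOperators

theorem Matrix.sum_mul_rowSum_eq_one {ι R : Type*} [Fintype ι] [DecidableEq ι] [CommRing R]
    {A B : Matrix ι ι R} (h : A * B = 1) (i : ι) :
    ∑ l, A i l * ∑ j, B l j = 1 := by
  calc ∑ l, A i l * ∑ j, B l j = ∑ j, (A * B) i j := by
        simp only [mul_apply, Finset.mul_sum]
        exact Finset.sum_comm
    _ = 1 := by simp [h, one_apply]

theorem Finset.sum_mul_le_sum_mul_of_nonpos_of_le {ι R : Type*} [Fintype ι] [CommRing R]
    [PartialOrder R] [IsOrderedRing R] {a s : ι → R} {i : ι}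
    (ha : ∀ l, l ≠ i → a l ≤ 0) (hs : ∀ l, s i ≤ s l) :
    ∑ l, a l * s l ≤ (∑ l, a l) * s i := by
  rw [Finset.sum_mul]
  refine Finset.sum_le_sum fun l _ => ?_
  rcases eq_or_ne l i with rfl | hl
  · exact le_rfl
  · exact mul_le_mul_of_nonpos_left (hs l) (ha l hl)

theorem min_row_sum_inverse_row_sum_general (n : ℕ) (U : Matrix (Fin (n + 1)) (Fin (n + 1)) ℝ)
    (hU : IsUnit U.det)
    (hZ : ∀ i j, i ≠ j → U⁻¹ i j ≤ 0)
    (hmin : ∀ i, ∑ j, U (Fin.last n) j ≤ ∑ j, U i j)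
    (hpos : ∀ i, 0 < ∑ j, U i j) :
    1 / (∑ j, U (Fin.last n) j) ≤ ∑ l, U⁻¹ (Fin.last n) l ∧
      0 < (1 : ℝ) / (∑ j, U (Fin.last n) j) := by
  have hs := hpos (Fin.last n)
  have hle : 1 ≤ (∑ l, U⁻¹ (Fin.last n) l) * ∑ j, U (Fin.last n) j := by
    rw [← sum_mul_rowSum_eq_one (nonsing_inv_mul U hU) (Fin.last n)]
    exact Finset.sum_mul_le_sum_mul_of_nonpos_of_le (fun l hl => hZ _ _ hl.symm) hmin
  exact ⟨(div_le_iff₀ hs).2 hle, by positivity⟩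

theorem min_row_sum_inverse_row_sum (n : ℕ) (U : Matrix (Fin (n + 1)) (Fin (n + 1)) ℝ)
    (hU : IsUnit U.det) (hnonneg : ∀ i j, 0 ≤ U i j)
    (hZ : ∀ i j, i ≠ j → U⁻¹ i j ≤ 0)
    (hmin : ∀ i, ∑ j, U (Fin.last n) j ≤ ∑ j, U i j)
    (hpos : ∀ i, 0 < ∑ j, U i j) :
    1 / (∑ j, U (Fin.last n) j) ≤ ∑ l, U⁻¹ (Fin.last n) l ∧
      0 < (1 : ℝ) / (∑ j, U (Fin.last n) j) :=
  min_row_sum_inverse_row_sum_general n U hU hZ hmin hpos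
end

section
/- Consider the 2×2 block matrix U = [[U_J, α 𝟏_J 𝟏_Kᵗ], [b_K 𝟏_Jᵗ, U_K]] where U_J, U_K are nonsingular, b_K = U_K e_K with e_K the last standard basis vector of the K-block, and α·(𝟏ᵗU_J⁻¹𝟏) ≠ 1. Then U is nonsingular and its inverse is the block matrix with blocks C = U_J⁻¹ + (α/(1−α μ̄_J)) μ_J ν_Jᵗ, D = (−α/(1−α μ̄_J)) μ_J ν_Kᵗ, E = (−1/(1−α μ̄_J)) e_K ν_Jᵗ, F = U_K⁻¹ + (α μ̄_J/(1−α μ̄_J)) e_K ν_Kᵗ, where μ_J = U_J⁻¹𝟏, ν_J = (U_Jᵗ)⁻¹𝟏, ν_K = (U_Kᵗ)⁻¹𝟏, and μ̄_J = 𝟏ᵗμ_J. -/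
/-! The same verification works for any rank-one off-diagonal blocks `α u vᵀ` and `(D e) wᵀ`
with `vᵀ e = 1` (here `u = v = w = 𝟏`, `e = e_K`). Every product of rank-one matrices collapses
to a scalar multiple of one, so each block of `U` times the claimed inverse reduces to a scalar
identity in `α` and `s = wᵀ A⁻¹ u`, with denominator `1 - α s`. -/

open Matrix

section RankOneCoupling

variable {K m n : Type*} [Field K] [Fintype m] [Fintype n] [DecidableEq m] [DecidableEq n]

theorem fromBlocks_rankOne_mul_eq_one {A : Matrix m m K} {D : Matrix n n K} {u w : m → K}
    {v e : n → K} {α s : K} (hA : IsUnit A.det) (hD : IsUnit D.det) (hve : v ⬝ᵥ e = 1)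
    (hs : w ⬝ᵥ A⁻¹ *ᵥ u = s) (hα : α * s ≠ 1) :
    fromBlocks A (α • vecMulVec u v) (vecMulVec (D *ᵥ e) w) D *
      fromBlocks (A⁻¹ + (α / (1 - α * s)) • vecMulVec (A⁻¹ *ᵥ u) (w ᵥ* A⁻¹))
        ((-α / (1 - α * s)) • vecMulVec (A⁻¹ *ᵥ u) (v ᵥ* D⁻¹))
        ((-1 / (1 - α * s)) • vecMulVec e (w ᵥ* A⁻¹))
        (D⁻¹ + (α * s / (1 - α * s)) • vecMulVec e (v ᵥ* D⁻¹)) = 1 := by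
  have hAA : A * A⁻¹ = 1 := mul_nonsing_inv A hA
  have hDD : D * D⁻¹ = 1 := mul_nonsing_inv D hD
  have hAu : A *ᵥ A⁻¹ *ᵥ u = u := by rw [mulVec_mulVec, hAA, one_mulVec]
  rw [fromBlocks_multiply, ← fromBlocks_one, fromBlocks_inj]
  refine ⟨?_, ?_, ?_, ?_⟩ <;>
  · simp only [Matrix.mul_add, Matrix.mul_smul, Matrix.smul_mul, mul_vecMulVec, vecMulVec_mul,
      smul_vecMulVec, vecMulVec_mulVec, op_smul_eq_smul, smul_mulVec, hAA, hDD, hAu, hve, hs, one_smul]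
    match_scalars <;> grind

end RankOneCoupling

theorem block_inverse_formula (m k : ℕ)
    (UJ : Matrix (Fin m) (Fin m) ℝ) (UK : Matrix (Fin (k + 1)) (Fin (k + 1)) ℝ)
    (α : ℝ) (hJ : IsUnit UJ.det) (hK : IsUnit UK.det)
    (eK : Fin (k + 1) → ℝ) (heK : eK = Pi.single (Fin.last k) 1)
    (μJ : Fin m → ℝ) (hμJ : μJ = UJ⁻¹ *ᵥ (fun _ => 1))
    (νJ : Fin m → ℝ) (hνJ : νJ = (UJᵀ)⁻¹ *ᵥ (fun _ => 1))
    (νK : Fin (k + 1) → ℝ) (hνK : νK = (UKᵀ)⁻¹ *ᵥ (fun _ => 1))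
    (μbarJ : ℝ) (hμbarJ : μbarJ = ∑ i, μJ i)
    (hα : α * μbarJ ≠ 1)
    (U : Matrix (Fin m ⊕ Fin (k + 1)) (Fin m ⊕ Fin (k + 1)) ℝ)
    (hU : U = fromBlocks UJ (α • vecMulVec (fun _ => 1) (fun _ => 1))
      (vecMulVec (UK *ᵥ eK) (fun _ => 1)) UK) :
    IsUnit U.det ∧
      U⁻¹ = fromBlocks
        (UJ⁻¹ + (α / (1 - α * μbarJ)) • vecMulVec μJ νJ)
        ((-α / (1 - α * μbarJ)) • vecMulVec μJ νK)
        ((-1 / (1 - α * μbarJ)) • vecMulVec eK νJ)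
        (UK⁻¹ + (α * μbarJ / (1 - α * μbarJ)) • vecMulVec eK νK) := by
  have h1e : (fun _ => (1 : ℝ)) ⬝ᵥ eK = 1 := by simp [heK]
  have hμbar : (fun _ => (1 : ℝ)) ⬝ᵥ UJ⁻¹ *ᵥ (fun _ => 1) = μbarJ := by
    simp [hμbarJ, hμJ, dotProduct]
  rw [hνJ, hνK, ← transpose_nonsing_inv, ← transpose_nonsing_inv, mulVec_transpose,
    mulVec_transpose]
  subst hμJ hU
  have hUV := fromBlocks_rankOne_mul_eq_one hJ hK h1e hμbar hα
  exact ⟨isUnit_det_of_right_inverse hUV, inv_eq_right_inv hUV⟩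
end

section
/- With U as in the block decomposition U = [[U_J, α 𝟏_J 𝟏_Kᵗ], [b_K 𝟏_Jᵗ, U_K]] (b_K the last column of U_K, both blocks nonsingular, α μ̄_J ≠ 1), the potential vector of U satisfies: the J-component of U⁻¹𝟏 equals ((1−α μ̄_K)/(1−α μ̄_J))·μ_J and the K-component equals μ_K − (μ̄_J(1−α μ̄_K)/(1−α μ̄_J))·e_K, where μ_J = U_J⁻¹𝟏_J, μ_K = U_K⁻¹𝟏_K, μ̄_J = 𝟏ᵗμ_J, μ̄_K = 𝟏ᵗμ_K. -/
open Matrix BigOperators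

/-!
The vector `x = (c • μJ, μK - (μ̄J * c) • eK)` with `c = (1 - α μ̄K) / (1 - α μ̄J)` solves
`U x = 𝟏`: the off-diagonal blocks have rank one, so they only see the sums of the components of
`x`, and `𝟏ᵗ eK = 1`. It is `U⁻¹ 𝟏` because `U` is nonsingular: its Schur complement is
`UK - α μ̄J (UK eK) 𝟏ᵗ = UK (1 - α μ̄J eK 𝟏ᵗ)`, of determinant `det UK * (1 - α μ̄J)` by the matrix
determinant lemma.
-/

namespace Matrix

variable {m n R : Type*} [CommRing R]

theorem vecMulVec_one_mulVec [Fintype n] (u : m → R) (v : n → R) :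
    vecMulVec u 1 *ᵥ v = (∑ i, v i) • u := by
  rw [vecMulVec_mulVec, one_dotProduct, op_smul_eq_smul]

variable [Fintype m] [Fintype n]

theorem fromBlocks_mulVec_sumElim_eq_one {A : Matrix m m R} {D : Matrix n n R} {μJ : m → R}
    {μK e : n → R} (hμJ : A *ᵥ μJ = 1) (hμK : D *ᵥ μK = 1) (he : ∑ i, e i = 1) {α c : R}
    (hc : c * (1 - α * ∑ i, μJ i) = 1 - α * ∑ i, μK i) :
    fromBlocks A (α • vecMulVec 1 1) (vecMulVec (D *ᵥ e) 1) D *ᵥ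
      Sum.elim (c • μJ) (μK - ((∑ i, μJ i) * c) • e) = 1 := by
  have hsumJ : ∑ i, (c • μJ) i = c * ∑ i, μJ i := by
    simp only [Pi.smul_apply, smul_eq_mul, Finset.mul_sum]
  have hsumK : ∑ i, (μK - ((∑ i, μJ i) * c) • e) i = ∑ i, μK i - (∑ i, μJ i) * c := by
    simp only [Pi.sub_apply, Pi.smul_apply, smul_eq_mul, Finset.sum_sub_distrib, ← Finset.mul_sum,
      he, mul_one]
  rw [fromBlocks_mulVec, Sum.elim_comp_inl, Sum.elim_comp_inr, smul_mulVec, vecMulVec_one_mulVec,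
    vecMulVec_one_mulVec, mulVec_smul, hμJ, mulVec_sub, mulVec_smul, hμK, hsumJ, hsumK]
  ext (i | i)
  · simp only [Sum.elim_inl, Pi.add_apply, Pi.smul_apply, Pi.one_apply, smul_eq_mul]
    linear_combination hc
  · simp only [Sum.elim_inr, Pi.add_apply, Pi.sub_apply, Pi.smul_apply, Pi.one_apply, smul_eq_mul]
    ring

variable [DecidableEq m] [DecidableEq n]

theorem det_one_add_vecMulVec (u v : n → R) : det (1 + vecMulVec u v) = 1 + v ⬝ᵥ u := by
  rw [vecMulVec_eq Unit, det_one_add_replicateCol_mul_replicateRow]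

theorem det_fromBlocks_vecMulVec_mulVec {A : Matrix m m R} (hA : IsUnit A.det) (D : Matrix n n R)
    (a w : m → R) (b e : n → R) :
    det (fromBlocks A (vecMulVec a b) (vecMulVec (D *ᵥ e) w) D) =
      det A * det D * (1 - (w ⬝ᵥ A⁻¹ *ᵥ a) * (b ⬝ᵥ e)) := by
  let := A.invertibleOfIsUnitDet hA
  have hSchur : D - vecMulVec (D *ᵥ e) w * ⅟A * vecMulVec a b =
      D * (1 + vecMulVec e (-(w ⬝ᵥ A⁻¹ *ᵥ a) • b)) := by
    rw [invOf_eq_nonsing_inv, vecMulVec_mul, vecMulVec_mul_vecMulVec, ← mul_vecMulVec,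
      Matrix.mul_add, Matrix.mul_one, vecMulVec_smul, vecMulVec_smul, Matrix.mul_smul,
      Matrix.mul_smul, ← dotProduct_mulVec, neg_smul, sub_eq_add_neg]
  rw [det_fromBlocks₁₁, hSchur, det_mul, det_one_add_vecMulVec, smul_dotProduct, smul_eq_mul]
  ring

end Matrix

theorem block_potential_vector (m k : ℕ)
    (UJ : Matrix (Fin m) (Fin m) ℝ) (UK : Matrix (Fin (k + 1)) (Fin (k + 1)) ℝ)
    (α : ℝ) (hJ : IsUnit UJ.det) (hK : IsUnit UK.det)
    (eK : Fin (k + 1) → ℝ) (heK : eK = Pi.single (Fin.last k) 1)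
    (μJ : Fin m → ℝ) (hμJ : μJ = UJ⁻¹ *ᵥ (fun _ => 1))
    (μK : Fin (k + 1) → ℝ) (hμK : μK = UK⁻¹ *ᵥ (fun _ => 1))
    (μbarJ : ℝ) (hμbarJ : μbarJ = ∑ i, μJ i)
    (μbarK : ℝ) (hμbarK : μbarK = ∑ i, μK i)
    (hα : α * μbarJ ≠ 1)
    (U : Matrix (Fin m ⊕ Fin (k + 1)) (Fin m ⊕ Fin (k + 1)) ℝ)
    (hU : U = fromBlocks UJ (α • vecMulVec (fun _ => 1) (fun _ => 1))
      (vecMulVec (UK *ᵥ eK) (fun _ => 1)) UK) :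
    (∀ j : Fin m, (U⁻¹ *ᵥ (fun _ => 1)) (Sum.inl j)
        = ((1 - α * μbarK) / (1 - α * μbarJ)) * μJ j) ∧
      (∀ i : Fin (k + 1), (U⁻¹ *ᵥ (fun _ => 1)) (Sum.inr i)
        = μK i - (μbarJ * (1 - α * μbarK) / (1 - α * μbarJ)) * eK i) := by
  simp only [← Pi.one_def] at hμJ hμK hU ⊢
  have hden : 1 - α * μbarJ ≠ 0 := sub_ne_zero.mpr hα.symm
  have hsum_eK : ∑ i, eK i = 1 := by simp [heK]
  have hUJμJ : UJ *ᵥ μJ = 1 := by rw [hμJ, mulVec_mulVec, mul_nonsing_inv _ hJ, one_mulVec]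
  have hUKμK : UK *ᵥ μK = 1 := by rw [hμK, mulVec_mulVec, mul_nonsing_inv _ hK, one_mulVec]
  have hdet : U.det = UJ.det * UK.det * (1 - α * μbarJ) := by
    rw [hU, ← smul_vecMulVec, det_fromBlocks_vecMulVec_mulVec hJ, mulVec_smul, ← hμJ,
      dotProduct_smul, one_dotProduct, one_dotProduct, hsum_eK, hμbarJ, smul_eq_mul, mul_one]
  let c := (1 - α * μbarK) / (1 - α * μbarJ)
  have hc : c * (1 - α * ∑ i, μJ i) = 1 - α * ∑ i, μK i := by
    rw [← hμbarJ, ← hμbarK, div_mul_cancel₀ _ hden]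
  have hsol : U *ᵥ Sum.elim (c • μJ) (μK - ((∑ i, μJ i) * c) • eK) = 1 :=
    hU ▸ fromBlocks_mulVec_sumElim_eq_one hUJμJ hUKμK hsum_eK hc
  let := U.invertibleOfIsUnitDet (hdet ▸ (hJ.mul hK).mul hden.isUnit)
  rw [inv_mulVec_eq_vec hsol.symm, ← hμbarJ]
  refine ⟨fun j => ?_, fun i => ?_⟩
  · simp [c]
  · simp only [Sum.elim_inr, Pi.sub_apply, Pi.smul_apply, smul_eq_mul, c]
    ring
end

section
/- With U as in the block decomposition U = [[U_J, α 𝟏_J 𝟏_Kᵗ], [b_K 𝟏_Jᵗ, U_K]] (b_K the last column of U_K, both diagonal blocks nonsingular, α μ̄_J ≠ 1), the total mass of U equals that of U_K: 𝟏ᵗU⁻¹𝟏 = 𝟏ᵗU_K⁻¹𝟏. -/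
/-!
For any solution of `U x = 𝟏`, the last block row reads `(𝟏ᵗx_J) U_K e_K + U_K x_K = 𝟏`, so
`x_K = U_K⁻¹𝟏 - (𝟏ᵗx_J) e_K`, and since `𝟏ᵗe_K = 1` the mass of `x_J` cancels from `𝟏ᵗx`.
It remains to see that `U` is invertible: the Schur complement of `U_K` is `U_J - α 𝟏𝟏ᵗ`, so
by the matrix determinant lemma `det U = det U_K · det U_J · (1 - α μ̄_J)`.
-/

open Matrix BigOperators

namespace Matrix

variable {R : Type*} [CommRing R] {m n : Type*} [Fintype m] [Fintype n] [DecidableEq n]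

theorem det_sub_vecMulVec [DecidableEq m] {A : Matrix m m R} (hA : IsUnit A.det) (u v : m → R) :
    (A - vecMulVec u v).det = A.det * (1 - v ⬝ᵥ A⁻¹ *ᵥ u) := by
  rw [sub_eq_add_neg, ← neg_vecMulVec, vecMulVec_eq Unit,
    det_add_replicateCol_mul_replicateRow hA, det_unique (n := Unit), dotProduct_mulVec]
  simp [mul_apply, replicateRow, replicateCol, vecMul, dotProduct, sub_eq_add_neg]

theorem det_fromBlocks_vecMulVec [DecidableEq m] {A : Matrix m m R} {D : Matrix n n R}
    (hA : IsUnit A.det) (hD : IsUnit D.det) (u : m → R) (v : n → R) (e : n → R) (w : m → R) :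
    (fromBlocks A (vecMulVec u v) (vecMulVec (D *ᵥ e) w) D).det =
      D.det * A.det * (1 - (v ⬝ᵥ e) • w ⬝ᵥ A⁻¹ *ᵥ u) := by
  let _ := invertibleOfIsUnitDet D hD
  rw [det_fromBlocks₂₂, invOf_eq_nonsing_inv, Matrix.mul_assoc, mul_vecMulVec,
    mulVec_mulVec, nonsing_inv_mul _ hD, one_mulVec, vecMulVec_mul_vecMulVec,
    det_sub_vecMulVec hA, mul_assoc]

theorem sum_eq_of_fromBlocks_mulVec_eq (A : Matrix m m R) (B : Matrix m n R)
    {D : Matrix n n R} (hD : IsUnit D.det) {e : n → R} (he : ∑ i, e i = 1)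
    {x : m ⊕ n → R} {b : m → R} {c : n → R}
    (hx : fromBlocks A B (vecMulVec (D *ᵥ e) 1) D *ᵥ x = Sum.elim b c) :
    ∑ i, x i = ∑ i, (D⁻¹ *ᵥ c) i := by
  have hc : D *ᵥ ((∑ i, x (Sum.inl i)) • e + x ∘ Sum.inr) = c := by
    rw [fromBlocks_mulVec] at hx
    have := congrArg (· ∘ Sum.inr) hx
    simp only [Sum.elim_comp_inr, vecMulVec_mulVec, op_smul_eq_smul] at this
    rw [← this, mulVec_add, mulVec_smul]
    simp [dotProduct]
  rw [← hc, mulVec_mulVec, nonsing_inv_mul _ hD, one_mulVec, Fintype.sum_sum_type]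
  simp [Finset.sum_add_distrib, ← Finset.mul_sum, he]

end Matrix

theorem block_total_mass_eq (m k : ℕ)
    (UJ : Matrix (Fin m) (Fin m) ℝ) (UK : Matrix (Fin (k + 1)) (Fin (k + 1)) ℝ)
    (α : ℝ) (hJ : IsUnit UJ.det) (hK : IsUnit UK.det)
    (eK : Fin (k + 1) → ℝ) (heK : eK = Pi.single (Fin.last k) 1)
    (hα : α * (∑ i, (UJ⁻¹ *ᵥ (fun _ => (1:ℝ))) i) ≠ 1)
    (U : Matrix (Fin m ⊕ Fin (k + 1)) (Fin m ⊕ Fin (k + 1)) ℝ)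
    (hU : U = fromBlocks UJ (α • vecMulVec (fun _ => 1) (fun _ => 1))
      (vecMulVec (UK *ᵥ eK) (fun _ => 1)) UK) :
    ∑ i, (U⁻¹ *ᵥ (fun _ => (1:ℝ))) i = ∑ i, (UK⁻¹ *ᵥ (fun _ => (1:ℝ))) i := by
  have heK_sum : ∑ i, eK i = 1 := by simp [heK]
  have hdet : U.det = UK.det * UJ.det * (1 - α * ∑ i, (UJ⁻¹ *ᵥ (fun _ => (1:ℝ))) i) := by
    rw [hU, ← smul_vecMulVec, det_fromBlocks_vecMulVec hJ hK]
    simp [dotProduct, heK_sum, mulVec_smul, Finset.mul_sum]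
  have hUdet : IsUnit U.det := by
    rw [hdet]
    exact (hK.mul hJ).mul (sub_ne_zero.mpr hα.symm).isUnit
  have hsol : U *ᵥ (U⁻¹ *ᵥ fun _ => 1) = Sum.elim (1 : Fin m → ℝ) 1 := by
    rw [mulVec_mulVec, mul_nonsing_inv _ hUdet, one_mulVec, Sum.elim_one_one]
    rfl
  nth_rw 1 [hU] at hsol
  exact sum_eq_of_fromBlocks_mulVec_eq UJ _ hK heK_sum hsol
end

section
/- Let U be a nonsingular 𝒰-matrix in standard 2×2 block form U = [[U_J, α 𝟏𝟏ᵗ], [b_K 𝟏ᵗ, U_K]] with α μ̄_J < 1, where U_J is a nonsingular matrix with potential vector μ_J = U_J⁻¹𝟏 and ν_K = (U_Kᵗ)⁻¹𝟏 = (1/U_{nn}) e_n. Then for i in the J-block and j in the K-block, (U⁻¹)_{ij} < 0 if and only if α > 0, (μ_J)_i > 0 and j = n. -/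
open Matrix BigOperators

/-!
With rank-one off-diagonal blocks `p qᵀ` and `(D e) rᵀ`, the Schur complement of `D` is the
rank-one update `A - c p rᵀ` of `A`, where `c = q ⬝ e`, so the whole inverse is explicit
(Sherman–Morrison). Its `(J, K)` block is `-(1 - c s)⁻¹ (A⁻¹ p)(qᵀ D⁻¹)` with `s = rᵀ A⁻¹ p`.
Here `A⁻¹ p = α μ_J`, `qᵀ D⁻¹ = ν_Kᵀ = U_nn⁻¹ e_nᵀ` and `1 - c s = 1 - α μ̄_J > 0`, so the
sign of each entry is read off factor by factor.
-/

namespace Matrix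

variable {K m n : Type*} [Field K] [Fintype m] [Fintype n] [DecidableEq m] [DecidableEq n]

theorem inv_fromBlocks_vecMulVec {A : Matrix m m K} {D : Matrix n n K}
    (hA : IsUnit A.det) (hD : IsUnit D.det) {p r : m → K} {q e : n → K} {c s : K}
    (hc : q ⬝ᵥ e = c) (hs : r ⬝ᵥ (A⁻¹ *ᵥ p) = s) (hcs : 1 - c * s ≠ 0) :
    (fromBlocks A (vecMulVec p q) (vecMulVec (D *ᵥ e) r) D)⁻¹ =
      fromBlocks (A⁻¹ + (c / (1 - c * s)) • vecMulVec (A⁻¹ *ᵥ p) (r ᵥ* A⁻¹))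
        (-(1 - c * s)⁻¹ • vecMulVec (A⁻¹ *ᵥ p) (q ᵥ* D⁻¹))
        (-(1 - c * s)⁻¹ • vecMulVec e (r ᵥ* A⁻¹))
        (D⁻¹ + (s / (1 - c * s)) • vecMulVec e (q ᵥ* D⁻¹)) := by
  have hAA : A * A⁻¹ = 1 := mul_nonsing_inv A hA
  have hDD : D * D⁻¹ = 1 := mul_nonsing_inv D hD
  refine inv_eq_right_inv ?_
  rw [fromBlocks_multiply, ← fromBlocks_one]
  congr 1
  · rw [Matrix.mul_add, hAA, Matrix.mul_smul, mul_vecMulVec, mulVec_mulVec, hAA, one_mulVec,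
      Matrix.mul_smul, vecMulVec_mul_vecMulVec, vecMulVec_smul, hc]
    field_simp
    module
  · rw [Matrix.mul_smul, mul_vecMulVec, mulVec_mulVec, hAA, one_mulVec, Matrix.mul_add,
      vecMulVec_mul, Matrix.mul_smul, vecMulVec_mul_vecMulVec, vecMulVec_smul, hc]
    match_scalars
    field_simp
    ring
  · rw [Matrix.mul_add, vecMulVec_mul, Matrix.mul_smul, vecMulVec_mul_vecMulVec, vecMulVec_smul, hs,
      Matrix.mul_smul, mul_vecMulVec]
    match_scalars
    field_simp
    ring
  · rw [Matrix.mul_smul, vecMulVec_mul_vecMulVec, vecMulVec_smul, hs, Matrix.mul_add, hDD,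
      Matrix.mul_smul, mul_vecMulVec]
    field_simp
    module

end Matrix

theorem mul_pos_iff_of_nonneg_right {R : Type*} [Ring R] [LinearOrder R] [IsStrictOrderedRing R]
    {a b : R} (hb : 0 ≤ b) : 0 < a * b ↔ 0 < a ∧ 0 < b := by
  rw [mul_pos_iff]
  exact ⟨fun h => h.resolve_right fun h' => h'.2.not_ge hb, Or.inl⟩

theorem link_JK_block (m k : ℕ)
    (UJ : Matrix (Fin m) (Fin m) ℝ) (UK : Matrix (Fin (k + 1)) (Fin (k + 1)) ℝ)
    (α : ℝ) (hJ : IsUnit UJ.det) (hK : IsUnit UK.det)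
    (eK : Fin (k + 1) → ℝ) (heK : eK = Pi.single (Fin.last k) 1)
    (μJ : Fin m → ℝ) (hμJ : μJ = UJ⁻¹ *ᵥ (fun _ => 1))
    (hμJnonneg : ∀ i, 0 ≤ μJ i)
    (hα : α * (∑ i, μJ i) < 1)
    (hUnn : 0 < UK (Fin.last k) (Fin.last k))
    (hνK : (UKᵀ)⁻¹ *ᵥ (fun _ => (1:ℝ))
      = (UK (Fin.last k) (Fin.last k))⁻¹ • (Pi.single (Fin.last k) 1 : Fin (k + 1) → ℝ))
    (U : Matrix (Fin m ⊕ Fin (k + 1)) (Fin m ⊕ Fin (k + 1)) ℝ)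
    (hU : U = fromBlocks UJ (α • vecMulVec (fun _ => 1) (fun _ => 1))
      (vecMulVec (UK *ᵥ eK) (fun _ => 1)) UK) :
    ∀ (i : Fin m) (j : Fin (k + 1)),
      U⁻¹ (Sum.inl i) (Sum.inr j) < 0 ↔ 0 < α ∧ 0 < μJ i ∧ j = Fin.last k := by
  intro i j
  have hμ : UJ⁻¹ *ᵥ (α • fun _ => 1) = α • μJ := by rw [mulVec_smul, hμJ]
  have hc : (fun _ => 1) ⬝ᵥ eK = 1 := by simp [heK]
  have hs : (fun _ => 1) ⬝ᵥ (UJ⁻¹ *ᵥ (α • fun _ => 1)) = α * ∑ i, μJ i := by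
    simp [hμ, dotProduct, Finset.mul_sum]
  have hδ : 0 < 1 - 1 * (α * ∑ i, μJ i) := by linarith
  have hν : (fun _ => 1) ᵥ* UK⁻¹ = (UKᵀ)⁻¹ *ᵥ (fun _ => 1) := by
    rw [← transpose_nonsing_inv, mulVec_transpose]
  rw [hU, ← smul_vecMulVec, inv_fromBlocks_vecMulVec hJ hK hc hs hδ.ne', hν, hνK, hμ]
  simp only [fromBlocks_apply₁₂, Matrix.smul_apply, vecMulVec_apply, Pi.smul_apply, smul_eq_mul]
  have hsingle : 0 < (Pi.single (Fin.last k) 1 : Fin (k + 1) → ℝ) j ↔ j = Fin.last k := by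
    rcases eq_or_ne j (Fin.last k) with rfl | hj <;> simp [*]
  have hz :
      0 ≤ (UK (Fin.last k) (Fin.last k))⁻¹ * (Pi.single (Fin.last k) 1 : Fin (k + 1) → ℝ) j := by
    rw [Pi.single_apply]
    split_ifs <;> positivity
  rw [neg_mul, neg_lt_zero, mul_pos_iff_of_pos_left (inv_pos.2 hδ), mul_pos_iff_of_nonneg_right hz,
    mul_pos_iff_of_nonneg_right (hμJnonneg i), and_assoc, mul_pos_iff_of_pos_left (inv_pos.2 hUnn),
    hsingle]
end

section
/- Let U be a nonsingular 𝒰-matrix in standard 2×2 block form U = [[U_J, α 𝟏𝟏ᵗ], [b_K 𝟏ᵗ, U_K]] with α μ̄_J < 1 and ν_J := (U_Jᵗ)⁻¹𝟏 ≥ 0 entrywise. Then for i in the K-block and j in the J-block, (U⁻¹)_{ij} < 0 if and only if i = n (the last index) and (ν_J)_j > 0. -/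
/-!
The inverse of `[[A, x yᵀ], [D e zᵀ, D]]` with `yᵀ e = 1` can be written down explicitly: with
`s = zᵀ A⁻¹ x ≠ 1`, its lower-left block is `-(1 - s)⁻¹ e (zᵀ A⁻¹)`, and each block of `U * U⁻¹ = 1`
reduces to a scalar identity in `s`. In the theorem `s = α μ̄_J < 1`, `e = e_K` and
`zᵀ A⁻¹ = ν_Jᵀ ≥ 0`, so an entry of that block is `-(1 - s)⁻¹ (e_K)_i (ν_J)_j`, which is negative
exactly when `i = n` and `(ν_J)_j > 0`.
-/

open Matrix

namespace Matrix

variable {K : Type*} [Field K] {m n : Type*} [Fintype m] [Fintype n] [DecidableEq m] [DecidableEq n]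

theorem inv_fromBlocks_vecMulVec_vecMulVec {A : Matrix m m K} {D : Matrix n n K}
    (hA : IsUnit A.det) (hD : IsUnit D.det) {x z : m → K} {y e : n → K} (hye : y ⬝ᵥ e = 1)
    {s : K} (hs : z ⬝ᵥ A⁻¹ *ᵥ x = s) (hs1 : s ≠ 1) :
    (fromBlocks A (vecMulVec x y) (vecMulVec (D *ᵥ e) z) D)⁻¹ =
      fromBlocks
        (A⁻¹ + (1 - s)⁻¹ • vecMulVec (A⁻¹ *ᵥ x) (z ᵥ* A⁻¹))
        (-(1 - s)⁻¹ • vecMulVec (A⁻¹ *ᵥ x) (y ᵥ* D⁻¹))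
        (-(1 - s)⁻¹ • vecMulVec e (z ᵥ* A⁻¹))
        (D⁻¹ + (s / (1 - s)) • vecMulVec e (y ᵥ* D⁻¹)) := by
  have h1s : 1 - s ≠ 0 := sub_ne_zero.mpr hs1.symm
  refine inv_eq_right_inv ?_
  rw [fromBlocks_multiply, ← fromBlocks_one, fromBlocks_inj]
  simp only [Matrix.mul_add, Matrix.mul_smul, mul_vecMulVec, mulVec_mulVec, mul_nonsing_inv _ hA,
    mul_nonsing_inv _ hD, one_mulVec, vecMulVec_mul, vecMulVec_mulVec, hye, ← dotProduct_mulVec, hs,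
    op_smul_eq_smul, one_smul, smul_vecMulVec]
  refine ⟨?_, ?_, ?_, ?_⟩ <;> match_scalars <;> field_simp <;> ring

end Matrix

theorem link_KJ_block (m k : ℕ)
    (UJ : Matrix (Fin m) (Fin m) ℝ) (UK : Matrix (Fin (k + 1)) (Fin (k + 1)) ℝ)
    (α : ℝ) (hJ : IsUnit UJ.det) (hK : IsUnit UK.det)
    (eK : Fin (k + 1) → ℝ) (heK : eK = Pi.single (Fin.last k) 1)
    (νJ : Fin m → ℝ) (hνJ : νJ = (UJᵀ)⁻¹ *ᵥ (fun _ => 1))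
    (hνJnonneg : ∀ j, 0 ≤ νJ j)
    (hα : α * (∑ i, (UJ⁻¹ *ᵥ (fun _ => (1:ℝ))) i) < 1)
    (U : Matrix (Fin m ⊕ Fin (k + 1)) (Fin m ⊕ Fin (k + 1)) ℝ)
    (hU : U = fromBlocks UJ (α • vecMulVec (fun _ => 1) (fun _ => 1))
      (vecMulVec (UK *ᵥ eK) (fun _ => 1)) UK) :
    ∀ (i : Fin (k + 1)) (j : Fin m),
      U⁻¹ (Sum.inr i) (Sum.inl j) < 0 ↔ i = Fin.last k ∧ 0 < νJ j := by
  set s := α * ∑ i, (UJ⁻¹ *ᵥ (fun _ => (1:ℝ))) i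
  have hs : (fun _ => 1) ⬝ᵥ UJ⁻¹ *ᵥ (α • fun _ => 1) = s := by
    simp [s, mulVec_smul, dotProduct, Finset.mul_sum]
  have hye : (fun _ => (1 : ℝ)) ⬝ᵥ eK = 1 := by simp [heK, dotProduct]
  have hνJ_row : (fun _ => 1) ᵥ* UJ⁻¹ = νJ := by
    rw [hνJ, ← transpose_nonsing_inv, mulVec_transpose]
  have ht : 0 < (1 - s)⁻¹ := inv_pos.mpr (sub_pos.mpr hα)
  intro i j
  rw [hU, ← smul_vecMulVec, inv_fromBlocks_vecMulVec_vecMulVec hJ hK hye hs hα.ne,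
    fromBlocks_apply₂₁, hνJ_row]
  rcases eq_or_ne i (Fin.last k) with rfl | hi
  · simp [heK, vecMulVec_apply, ht, (hνJnonneg j).lt_iff_ne]
  · simp [heK, vecMulVec_apply, hi]
end

section
/- Let U be a 3×3 symmetric nonnegative matrix satisfying the ultrametric inequality U_{ij} ≥ min(U_{ik}, U_{kj}) for all i,j,k, and suppose U is nonsingular with U_{ii} > max_{j≠i} U_{ij} for all i. Then U⁻¹ is both row and column diagonally dominant, i.e., U⁻¹𝟏 ≥ 0 and 𝟏ᵗU⁻¹ ≥ 0 entrywise, and U⁻¹ has nonpositive off-diagonal entries. -/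
/-!
Write `x = U i j`, `y = U i k`, `z = U j k`, `p = U j j`, `q = U k k` for distinct `i, j, k`.
For a symmetric `3 × 3` matrix the off-diagonal adjugate entry `(i, j)` is `y z - x q`, and the
`i`-th row sum of the adjugate is `(p - x) (q - y) - (z - x) (z - y)`. The ultrametric inequality
gives `y z = min y z * max y z ≤ x q`, and it puts `z` either between `x` and `y` or above both,
which together with strict diagonal dominance makes the row sum positive. Since
`U (adj U 𝟏) = det U • 𝟏` and `U ≥ 0`, this forces `det U > 0`, so `U⁻¹ = (det U)⁻¹ • adj U`
inherits both sign patterns; symmetry turns row sums into column sums.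
-/

open Matrix BigOperators

section LinearOrderedRing

variable {R : Type*} [CommRing R] [LinearOrder R] [IsStrictOrderedRing R]

theorem mul_le_mul_of_min_le_of_max_le {a b c d : R} (ha : 0 ≤ a) (hb : 0 ≤ b)
    (hc : min a b ≤ c) (hd : max a b ≤ d) : a * b ≤ c * d := by
  rw [← min_mul_max]
  exact mul_le_mul hc hd (le_max_of_le_left ha) ((le_min ha hb).trans hc)

theorem sub_mul_sub_lt_sub_mul_sub_of_min_le {x y z p q : R} (hz : min x y ≤ z)
    (hzp : z < p) (hzq : z < q) (hxp : x < p) (hyq : y < q) :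
    (z - x) * (z - y) < (p - x) * (q - y) := by
  rcases le_or_gt (max x y) z with hmax | hmax
  · obtain ⟨hxz, hyz⟩ := max_le_iff.1 hmax
    calc (z - x) * (z - y) ≤ (z - x) * (q - y) := by gcongr
      _ < (p - x) * (q - y) := by gcongr
  · have hneg : (z - x) * (z - y) ≤ 0 := by
      rcases lt_max_iff.1 hmax with h | h <;> rcases min_le_iff.1 hz with h' | h' <;>
        nlinarith
    nlinarith [mul_pos (sub_pos.2 hxp) (sub_pos.2 hyq)]

theorem Matrix.det_pos_of_adjugate_mulVec_one_pos {n : Type*} [Fintype n] [DecidableEq n]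
    {A : Matrix n n R} (hA : ∀ i j, 0 ≤ A i j) {i j : n} (hij : 0 < A i j)
    (hadj : ∀ k, 0 < (A.adjugate *ᵥ fun _ => 1) k) : 0 < A.det := by
  have h : A *ᵥ (A.adjugate *ᵥ fun _ => 1) = A.det • fun _ => 1 := by
    rw [mulVec_mulVec, mul_adjugate, smul_mulVec, one_mulVec]
  have hi : ∑ k, A i k * (A.adjugate *ᵥ fun _ => 1) k = A.det * 1 := congrFun h i
  rw [← mul_one A.det, ← hi]
  exact Finset.sum_pos' (fun k _ => mul_nonneg (hA i k) (hadj k).le)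
    ⟨j, Finset.mem_univ j, mul_pos hij (hadj j)⟩

end LinearOrderedRing

theorem Fin.sum_univ_three_of_ne {M : Type*} [AddCommMonoid M] (f : Fin 3 → M) {i j k : Fin 3}
    (hij : i ≠ j) (hik : i ≠ k) (hjk : j ≠ k) : ∑ l, f l = f i + f j + f k := by
  fin_cases i <;> fin_cases j <;> fin_cases k <;> simp_all [Fin.sum_univ_three] <;> abel

namespace Matrix

section FinThree

variable {R : Type*} [CommRing R] (A : Matrix (Fin 3) (Fin 3) R) {i j k : Fin 3}

theorem adjugate_fin_three_of_ne (hij : i ≠ j) (hik : i ≠ k) (hjk : j ≠ k) :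
    A.adjugate i j = A i k * A k j - A i j * A k k := by
  fin_cases i <;> fin_cases j <;> fin_cases k <;> simp_all [adjugate_fin_three] <;> ring

theorem adjugate_fin_three_self (hij : i ≠ j) (hik : i ≠ k) (hjk : j ≠ k) :
    A.adjugate i i = A j j * A k k - A j k * A k j := by
  fin_cases i <;> fin_cases j <;> fin_cases k <;> simp_all [adjugate_fin_three] <;> ring

theorem IsSymm.adjugate_mulVec_one_fin_three {A : Matrix (Fin 3) (Fin 3) R} (hA : A.IsSymm)
    (hij : i ≠ j) (hik : i ≠ k) (hjk : j ≠ k) :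
    (A.adjugate *ᵥ fun _ => 1) i =
      (A j j - A i j) * (A k k - A i k) - (A j k - A i j) * (A j k - A i k) := by
  change ∑ l, A.adjugate i l * 1 = _
  rw [Fin.sum_univ_three_of_ne _ hij hik hjk, adjugate_fin_three_self A hij hik hjk,
    adjugate_fin_three_of_ne A hij hik hjk, adjugate_fin_three_of_ne A hik hij hjk.symm,
    hA.apply j k]
  ring

end FinThree

section Ultrametric

variable {R : Type*} [CommRing R] [LinearOrder R] [IsStrictOrderedRing R]
  {U : Matrix (Fin 3) (Fin 3) R}

theorem adjugate_mulVec_one_pos_of_ultrametric (hsymm : U.IsSymm)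
    (hultra : ∀ i j k, min (U i k) (U k j) ≤ U i j) (hdiag : ∀ i j, i ≠ j → U i j < U i i)
    (i : Fin 3) : 0 < (U.adjugate *ᵥ fun _ => 1) i := by
  obtain ⟨j, k, hij, hik, hjk⟩ : ∃ j k : Fin 3, i ≠ j ∧ i ≠ k ∧ j ≠ k := by
    fin_cases i <;> decide
  rw [hsymm.adjugate_mulVec_one_fin_three hij hik hjk, sub_pos]
  refine sub_mul_sub_lt_sub_mul_sub_of_min_le ?_ (hdiag j k hjk) ?_ ?_ ?_
  · simpa only [hsymm.apply i j] using hultra j k i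
  · simpa only [hsymm.apply j k] using hdiag k j hjk.symm
  · simpa only [hsymm.apply i j] using hdiag j i hij.symm
  · simpa only [hsymm.apply i k] using hdiag k i hik.symm

theorem adjugate_nonpos_of_ultrametric (hsymm : U.IsSymm) (hnonneg : ∀ i j, 0 ≤ U i j)
    (hultra : ∀ i j k, min (U i k) (U k j) ≤ U i j) (hdiag : ∀ i j, i ≠ j → U i j < U i i)
    {i j : Fin 3} (hij : i ≠ j) : U.adjugate i j ≤ 0 := by
  obtain ⟨k, hik, hjk⟩ : ∃ k : Fin 3, i ≠ k ∧ j ≠ k := by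
    fin_cases i <;> fin_cases j <;> decide
  rw [adjugate_fin_three_of_ne U hij hik hjk, sub_nonpos]
  refine mul_le_mul_of_min_le_of_max_le (hnonneg i k) (hnonneg k j) (hultra i j k) ?_
  rw [← hsymm.apply i k]
  exact max_le (hdiag k i hik.symm).le (hdiag k j hjk.symm).le

end Ultrametric

end Matrix

theorem ultrametric_3x3_inverse_dominant_general (U : Matrix (Fin 3) (Fin 3) ℝ)
    (hsymm : Uᵀ = U) (hnonneg : ∀ i j, 0 ≤ U i j)
    (hultra : ∀ i j k, min (U i k) (U k j) ≤ U i j)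
    (hdiag : ∀ i j, i ≠ j → U i j < U i i) :
    (∀ i, 0 ≤ (U⁻¹ *ᵥ (fun _ => (1 : ℝ))) i) ∧
      (∀ j, 0 ≤ ((fun _ => (1 : ℝ)) ᵥ* U⁻¹) j) ∧
      (∀ i j, i ≠ j → U⁻¹ i j ≤ 0) := by
  have hrow := adjugate_mulVec_one_pos_of_ultrametric hsymm hultra hdiag
  have hdet : 0 < U.det := det_pos_of_adjugate_mulVec_one_pos hnonneg
    ((hnonneg 0 1).trans_lt (hdiag 0 1 (by decide))) hrow
  have hdet_inv : 0 ≤ U.det⁻¹ := inv_nonneg.2 hdet.le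
  have hinv : U⁻¹ = U.det⁻¹ • U.adjugate := by rw [inv_def, Ring.inverse_eq_inv']
  have hinv_symm : U⁻¹ᵀ = U⁻¹ := by rw [transpose_nonsing_inv, hsymm]
  have hinv_row : ∀ i, 0 ≤ (U⁻¹ *ᵥ fun _ => (1 : ℝ)) i := fun i => by
    rw [hinv, smul_mulVec, Pi.smul_apply, smul_eq_mul]
    exact mul_nonneg hdet_inv (hrow i).le
  refine ⟨hinv_row, fun j => ?_, fun i j hij => ?_⟩
  · rw [← hinv_symm, vecMul_transpose]
    exact hinv_row j
  · rw [hinv, Matrix.smul_apply, smul_eq_mul]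
    exact mul_nonpos_of_nonneg_of_nonpos hdet_inv
      (adjugate_nonpos_of_ultrametric hsymm hnonneg hultra hdiag hij)

theorem ultrametric_3x3_inverse_dominant (U : Matrix (Fin 3) (Fin 3) ℝ)
    (hsymm : Uᵀ = U) (hnonneg : ∀ i j, 0 ≤ U i j)
    (hultra : ∀ i j k, min (U i k) (U k j) ≤ U i j)
    (hU : IsUnit U.det)
    (hdiag : ∀ i j, i ≠ j → U i j < U i i) :
    (∀ i, 0 ≤ (U⁻¹ *ᵥ (fun _ => (1 : ℝ))) i) ∧
      (∀ j, 0 ≤ ((fun _ => (1 : ℝ)) ᵥ* U⁻¹) j) ∧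
      (∀ i j, i ≠ j → U⁻¹ i j ≤ 0) :=
  ultrametric_3x3_inverse_dominant_general U hsymm hnonneg hultra hdiag
end
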